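/- For the family of 4-dimensional complex Leibniz algebras Ω(α,1) defined by [e₁,e₁]=e₃, [e₁,e₂]=α e₄, [e₂,e₂]=e₄, [e₃,e₁]=e₄ (other products zero), every Ω(α,1) is isomorphic to Ω(0,1); explicitly, the change of basis e₁' = e₁ − α e₂ type transformation provides an isomorphism. -/
import Mathlib


/-- The bracket of `Ω(α,1)`: `[e₁,e₁]=e₃, [e₁,e₂]=α e₄, [e₂,e₂]=e₄,
[e₃,e₁]=e₄` (basis indexed `0,…,3`), other products zero. -/
def omegaBr (α : ℂ) (x y : Fin 4 → ℂ) : Fin 4 → ℂ :=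
  ![0, 0, x 0 * y 0, α * (x 0 * y 1) + x 1 * y 1 + x 2 * y 0]

/-- Every `Ω(α,1)` is isomorphic to `Ω(0,1)`. -/
theorem stmt_13 (α : ℂ) :
    ∃ f : (Fin 4 → ℂ) ≃ₗ[ℂ] (Fin 4 → ℂ),
      ∀ x y, f (omegaBr α x y) = omegaBr 0 (f x) (f y) := by
  refine ⟨{ toFun := fun x => ![x 0, x 1 + α * x 0, x 2 - α * x 1 - α^2 * x 0, x 3]
            invFun := fun y => ![y 0, y 1 - α * y 0, y 2 + α * y 1, y 3]
            map_add' := ?_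
            map_smul' := ?_
            left_inv := ?_
            right_inv := ?_ }, ?_⟩
  · intro x y; funext i; fin_cases i <;> simp <;> ring
  · intro c x; funext i; fin_cases i <;> simp <;> ring
  · intro x; funext i; fin_cases i <;> simp <;> ring
  · intro y; funext i; fin_cases i <;> simp <;> ring
  · intro x y
    funext i
    fin_cases i <;> simp [omegaBr] <;> ring
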